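/- Let X be a sequentially ASQ Banach space and suppose there exists a selective ultrafilter U on ℕ. Then there exists h in the unit sphere of the fourth dual X'''' such that ‖x + h‖ = max{‖x‖, 1} for every x ∈ X. -/

import Mathlib

open NormedSpace Filter Topology

namespace NormedSpace

/-- The topological dual of a seminormed space `E` (as `NormedSpace.Dual` in the older Mathlib). -/
def Dual (𝕜 : Type*) [NontriviallyNormedField 𝕜] (E : Type*) [SeminormedAddCommGroup E]
    [NormedSpace 𝕜 E] : Type _ :=
  E →L[𝕜] 𝕜

noncomputable instance (𝕜 : Type*) [NontriviallyNormedField 𝕜] (E : Type*) [SeminormedAddCommGroup E]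
    [NormedSpace 𝕜 E] : SeminormedAddCommGroup (Dual 𝕜 E) :=
  ContinuousLinearMap.toSeminormedAddCommGroup

noncomputable instance (𝕜 : Type*) [NontriviallyNormedField 𝕜] (E : Type*) [SeminormedAddCommGroup E]
    [NormedSpace 𝕜 E] : NormedSpace 𝕜 (Dual 𝕜 E) :=
  ContinuousLinearMap.toNormedSpace

instance (𝕜 : Type*) [NontriviallyNormedField 𝕜] (E : Type*) [SeminormedAddCommGroup E]
    [NormedSpace 𝕜 E] : FunLike (Dual 𝕜 E) E 𝕜 :=
  ContinuousLinearMap.funLike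

end NormedSpace

/-- The canonical embedding of a normed space into its fourth dual. -/
noncomputable def fourthDualEmbed (X : Type*) [NormedAddCommGroup X] [NormedSpace ℝ X] :
    X →L[ℝ] Dual ℝ (Dual ℝ (Dual ℝ (Dual ℝ X))) :=
  (inclusionInDoubleDual ℝ (Dual ℝ (Dual ℝ X))).comp (inclusionInDoubleDual ℝ X)

/-- A nonprincipal ultrafilter on ℕ is selective if for every partition of ℕ into sets
not belonging to the ultrafilter there is a set in the ultrafilter meeting each piece of
the partition in exactly one point. -/
def SelectiveUltrafilter (U : Ultrafilter ℕ) : Prop :=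
  (∀ n : ℕ, ({n}ᶜ : Set ℕ) ∈ U) ∧
    ∀ A : ℕ → Set ℕ, (⋃ n, A n) = Set.univ → Pairwise (Function.onFun Disjoint A) →
      (∀ n, A n ∉ U) → ∃ S ∈ U, ∀ n, ∃! m, m ∈ S ∩ A n

section PortAux

abbrev MyDual (𝕜 : Type*) [NontriviallyNormedField 𝕜] (E : Type*) [SeminormedAddCommGroup E]
    [NormedSpace 𝕜 E] : Type _ :=
  E →L[𝕜] 𝕜

noncomputable def myFourth (X : Type*) [NormedAddCommGroup X] [NormedSpace ℝ X] :
    X →L[ℝ] MyDual ℝ (MyDual ℝ (MyDual ℝ (MyDual ℝ X))) :=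
  (inclusionInDoubleDual ℝ (MyDual ℝ (MyDual ℝ X))).comp (inclusionInDoubleDual ℝ X)

local notation "Dual" => MyDual

local notation "fourthDualEmbed" => myFourth

def SgnFun (σ : ℕ → ℝ) : Prop := ∀ k, σ k = 1 ∨ σ k = -1

section Ulim

variable {α : Type*}

open Classical in
/-- Limit of a function along an ultrafilter (junk value if no limit). -/
noncomputable def ulim (V : Ultrafilter α) (f : α → ℝ) : ℝ :=
  if h : ∃ a : ℝ, Tendsto f (V : Filter α) (𝓝 a) then h.choose else 0

lemma ulim_exists {V : Ultrafilter α} {f : α → ℝ} {C : ℝ}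
    (hb : ∀ᶠ a in (V : Filter α), |f a| ≤ C) : ∃ L : ℝ, Tendsto f (V : Filter α) (𝓝 L) := by
  have hmem : Set.Icc (-C) C ∈ (V.map f : Filter ℝ) := by
    refine Filter.mem_map.2 ?_
    filter_upwards [hb] with a ha
    simp only [Set.mem_preimage, Set.mem_Icc]
    constructor <;> [linarith [abs_le.1 ha |>.1]; linarith [abs_le.1 ha |>.2]]
  obtain ⟨L, _, hL⟩ := (isCompact_Icc (a := -C) (b := C)).ultrafilter_le_nhds (V.map f)
    (le_principal_iff.2 hmem)
  exact ⟨L, hL⟩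

lemma ulim_eq {V : Ultrafilter α} {f : α → ℝ} {L : ℝ}
    (h : Tendsto f (V : Filter α) (𝓝 L)) : ulim V f = L := by
  rw [ulim, dif_pos (⟨L, h⟩ : ∃ a : ℝ, Tendsto f (V : Filter α) (𝓝 a))]
  exact tendsto_nhds_unique (Exists.choose_spec (⟨L, h⟩ : ∃ a : ℝ, Tendsto f _ (𝓝 a))) h

lemma tendsto_ulim {V : Ultrafilter α} {f : α → ℝ} {C : ℝ}
    (hb : ∀ᶠ a in (V : Filter α), |f a| ≤ C) :
    Tendsto f (V : Filter α) (𝓝 (ulim V f)) := by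
  obtain ⟨L, hL⟩ := ulim_exists hb
  rwa [ulim_eq hL]

lemma ulim_le {V : Ultrafilter α} {f : α → ℝ} {C c : ℝ}
    (hb : ∀ᶠ a in (V : Filter α), |f a| ≤ C)
    (hle : ∀ᶠ a in (V : Filter α), f a ≤ c) : ulim V f ≤ c :=
  le_of_tendsto (tendsto_ulim hb) hle

lemma le_ulim {V : Ultrafilter α} {f : α → ℝ} {C c : ℝ}
    (hb : ∀ᶠ a in (V : Filter α), |f a| ≤ C)
    (hle : ∀ᶠ a in (V : Filter α), c ≤ f a) : c ≤ ulim V f :=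
  ge_of_tendsto (tendsto_ulim hb) hle

lemma abs_ulim_le {V : Ultrafilter α} {f : α → ℝ} {C c : ℝ}
    (hb : ∀ᶠ a in (V : Filter α), |f a| ≤ C)
    (hle : ∀ᶠ a in (V : Filter α), |f a| ≤ c) : |ulim V f| ≤ c := by
  rw [abs_le]
  constructor
  · exact le_ulim hb (by filter_upwards [hle] with a ha using (abs_le.1 ha).1)
  · exact ulim_le hb (by filter_upwards [hle] with a ha using (abs_le.1 ha).2)

lemma ulim_add {V : Ultrafilter α} {f g : α → ℝ} {Lf Lg : ℝ}
    (hf : Tendsto f (V : Filter α) (𝓝 Lf)) (hg : Tendsto g (V : Filter α) (𝓝 Lg)) :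
    ulim V (fun a => f a + g a) = Lf + Lg := ulim_eq (hf.add hg)

end Ulim

section Sel
variable {U : Ultrafilter ℕ}

lemma sel_compl_finite_mem (hU : SelectiveUltrafilter U) {s : Set ℕ} (hs : s.Finite) :
    sᶜ ∈ U := by
  have h1 : ⋂ n ∈ s, ({n}ᶜ : Set ℕ) ∈ U := (Filter.biInter_mem hs).2 fun n _ => hU.1 n
  have h2 : sᶜ = ⋂ n ∈ s, ({n}ᶜ : Set ℕ) := by
    ext y
    simp only [Set.mem_compl_iff, Set.mem_iInter, Set.mem_singleton_iff]
    exact ⟨fun h i hi he => h (he ▸ hi), fun h hy => h y hy rfl⟩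
  rwa [h2]

lemma sel_le_atTop (hU : SelectiveUltrafilter U) : (U : Filter ℕ) ≤ atTop := by
  intro s hs
  obtain ⟨N, hN⟩ := mem_atTop_sets.1 hs
  have hsub : {n : ℕ | n < N}ᶜ ⊆ s := by
    intro n hn
    exact hN n (not_lt.1 (by simpa using hn))
  exact Filter.mem_of_superset (sel_compl_finite_mem hU (Set.finite_Iio N)) hsub

private def qaux (g : ℕ → ℕ) : ℕ → ℕ
  | 0 => 0
  | (j+1) => qaux g j + 1 + (Finset.range (qaux g j + 1)).sup g

lemma sel_qlemma (hU : SelectiveUltrafilter U) (g : ℕ → ℕ) :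
    ∃ A ∈ U, ∀ m ∈ A, ∀ n ∈ A, m < n → g m < n := by
  classical
  set a : ℕ → ℕ := qaux g with ha
  have hastep : ∀ j, a (j + 1) = a j + 1 + (Finset.range (a j + 1)).sup g := fun _ => rfl
  have hmono : StrictMono a := strictMono_nat_of_lt_succ (fun j => by rw [hastep]; omega)
  have hgbd : ∀ j m, m ≤ a j → g m < a (j + 1) := by
    intro j m hm
    have hle : g m ≤ (Finset.range (a j + 1)).sup g :=
      Finset.le_sup (Finset.mem_range.2 (by omega))
    rw [hastep]; omega
  have haj : ∀ j, j ≤ a j := fun j => hmono.le_apply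
  have hcover : ∀ m : ℕ, ∃ j, a j ≤ m ∧ m < a (j + 1) := by
    intro m
    have hP : ∃ j, m < a j := ⟨m + 1, lt_of_lt_of_le (Nat.lt_succ_self m) (haj (m + 1))⟩
    have hj0 : m < a (Nat.find hP) := Nat.find_spec hP
    have hj0pos : Nat.find hP ≠ 0 := by
      intro h0
      have h00 : m < a 0 := h0 ▸ hj0
      exact Nat.not_lt_zero m (by simpa [ha, qaux] using h00)
    obtain ⟨j, hj⟩ := Nat.exists_eq_succ_of_ne_zero hj0pos
    have hle : a j ≤ m := not_lt.1 (Nat.find_min hP (by omega))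
    exact ⟨j, hle, by rw [show j + 1 = Nat.find hP by omega]; exact hj0⟩
  let I : ℕ → Set ℕ := fun j => Set.Ico (a j) (a (j + 1))
  have hImem : ∀ m j, m ∈ I j ↔ (a j ≤ m ∧ m < a (j + 1)) := fun m j => Set.mem_Ico
  have hdisj : Pairwise (Function.onFun Disjoint I) := by
    intro i j hij
    refine Set.disjoint_left.2 fun m hmi hmj => ?_
    obtain ⟨h1a, h1b⟩ := (hImem m i).1 hmi
    obtain ⟨h2a, h2b⟩ := (hImem m j).1 hmj
    rcases hij.lt_or_gt with h | h
    · have hmo : a (i + 1) ≤ a j := hmono.monotone (by omega)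
      omega
    · have hmo : a (j + 1) ≤ a i := hmono.monotone (by omega)
      omega
  have hInotU : ∀ j, I j ∉ U := by
    intro j hj
    have h2 : (∅ : Set ℕ) ∈ U := by
      have h3 := Filter.inter_mem hj (sel_compl_finite_mem hU (Set.finite_Ico (a j) (a (j+1))))
      exact Filter.mem_of_superset h3 (by intro m hm; exact hm.2 hm.1)
    exact (Filter.empty_notMem (U : Filter ℕ)) h2
  obtain ⟨S, hS, hSel⟩ := hU.2 I
    (Set.eq_univ_of_forall (fun m => Set.mem_iUnion.2 (by
      obtain ⟨j, hj⟩ := hcover m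
      exact ⟨j, (hImem m j).2 hj⟩)))
    hdisj hInotU
  choose idx hidx using hcover
  have key : ∀ (P : Set ℕ), (∀ m ∈ S ∩ P, ∀ n ∈ S ∩ P, idx m < idx n → idx m + 2 ≤ idx n) →
      ∀ m ∈ S ∩ P, ∀ n ∈ S ∩ P, m < n → g m < n := by
    intro P hpar m hm n hn hmn
    obtain ⟨hmS, hmP⟩ := hm
    obtain ⟨hnS, hnP⟩ := hn
    obtain ⟨hm1, hm2⟩ := hidx m
    obtain ⟨hn1, hn2⟩ := hidx n
    have hne : idx m ≠ idx n := by
      intro he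
      have hjn' : n ∈ I (idx m) := (hImem n (idx m)).2 (by rw [he]; exact ⟨hn1, hn2⟩)
      have hjm' : m ∈ I (idx m) := (hImem m (idx m)).2 ⟨hm1, hm2⟩
      have huniq := (hSel (idx m)).unique (Set.mem_inter hmS hjm') (Set.mem_inter hnS hjn')
      omega
    have hlt : idx m < idx n := by
      rcases lt_or_gt_of_ne hne with h | h
      · exact h
      · exfalso
        have hmo : a (idx n + 1) ≤ a (idx m) := hmono.monotone (by omega)
        omega
    have h2 : idx m + 2 ≤ idx n := hpar m ⟨hmS, hmP⟩ n ⟨hnS, hnP⟩ hlt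
    have h3 : g m < a (idx m + 2) := hgbd (idx m + 1) m (by omega)
    have h4 : a (idx m + 2) ≤ a (idx n) := hmono.monotone h2
    omega
  rcases U.mem_or_compl_mem {m | Even (idx m)} with hE | hE
  · refine ⟨S ∩ {m | Even (idx m)}, Filter.inter_mem hS hE, key _ ?_⟩
    intro m hm n hn hlt
    have hmE : Even (idx m) := hm.2
    have hnE : Even (idx n) := hn.2
    by_contra hc
    have he : idx n = idx m + 1 := by omega
    rw [he] at hnE
    exact (Nat.even_add_one.1 hnE) hmE
  · refine ⟨S ∩ {m | Even (idx m)}ᶜ, Filter.inter_mem hS hE, key _ ?_⟩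
    intro m hm n hn hlt
    have hmE : ¬ Even (idx m) := hm.2
    have hnE : ¬ Even (idx n) := hn.2
    by_contra hc
    have he : idx n = idx m + 1 := by omega
    rw [he] at hnE
    exact hnE (Nat.even_add_one.2 hmE)

end Sel

section Series
variable {X : Type*} [NormedAddCommGroup X] [NormedSpace ℝ X]

/-- All signed sums over finite subsets of `B` are bounded by `1 + c`. -/
def GoodSgn (x : ℕ → X) (c : ℝ) (B : Set ℕ) : Prop :=
  ∀ F : Finset ℕ, F.Nonempty → ↑F ⊆ B → ∀ σ : ℕ → ℝ, SgnFun σ →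
    ‖∑ k ∈ F, σ k • x k‖ ≤ 1 + c

lemma GoodSgn.mono {x : ℕ → X} {c : ℝ} {B B' : Set ℕ} (hsub : B' ⊆ B)
    (h : GoodSgn x c B) : GoodSgn x c B' :=
  fun F hne hF σ hσ => h F hne (subset_trans hF hsub) σ hσ

noncomputable def SER (x : ℕ → X) (ψ : Dual ℝ X) (B : Set ℕ) : ℝ :=
  ∑' k, B.indicator (fun j => ψ (x j)) k

variable {x : ℕ → X} {c : ℝ} {B : Set ℕ}

lemma ser_partial_abs (hB : GoodSgn x c B) (hc : 0 ≤ c) (ψ : Dual ℝ X)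
    {F : Finset ℕ} (hF : ↑F ⊆ B) :
    ∑ k ∈ F, |ψ (x k)| ≤ ‖ψ‖ * (1 + c) := by
  rcases F.eq_empty_or_nonempty with rfl | hne
  · simp; positivity
  · classical
    set σ : ℕ → ℝ := fun k => if 0 ≤ ψ (x k) then 1 else -1 with hσdef
    have hσ : SgnFun σ := by
      intro k
      by_cases h : 0 ≤ ψ (x k) <;> simp [hσdef, h]
    have h1 : ∀ k, |ψ (x k)| = σ k * ψ (x k) := by
      intro k
      by_cases h : 0 ≤ ψ (x k)
      · rw [abs_of_nonneg h]; simp [hσdef, h]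
      · rw [abs_of_neg (not_le.1 h)]; simp [hσdef, h]
    have h2 : ∑ k ∈ F, |ψ (x k)| = ψ (∑ k ∈ F, σ k • x k) := by
      rw [map_sum]
      refine Finset.sum_congr rfl fun k _ => ?_
      rw [h1 k, ContinuousLinearMap.map_smul, smul_eq_mul]
    rw [h2]
    calc ψ (∑ k ∈ F, σ k • x k) ≤ |ψ (∑ k ∈ F, σ k • x k)| := le_abs_self _
      _ ≤ ‖ψ‖ * ‖∑ k ∈ F, σ k • x k‖ := ψ.le_opNorm _
      _ ≤ ‖ψ‖ * (1 + c) := by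
          exact mul_le_mul_of_nonneg_left (hB F hne hF σ hσ) (norm_nonneg ψ)

lemma ser_range_sum (ψ : Dual ℝ X) (n : ℕ) [DecidablePred (· ∈ B)] :
    ∑ k ∈ Finset.range n, B.indicator (fun j => ψ (x j)) k
      = ψ (∑ k ∈ (Finset.range n).filter (· ∈ B), x k) := by
  rw [map_sum, Finset.sum_filter]
  refine Finset.sum_congr rfl fun k _ => ?_
  by_cases h : k ∈ B <;> simp [Set.indicator_apply, h]

lemma ser_summable_abs (hB : GoodSgn x c B) (hc : 0 ≤ c) (ψ : Dual ℝ X) :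
    Summable (fun k => |B.indicator (fun j => ψ (x j)) k|) := by
  classical
  refine summable_of_sum_range_le (c := ‖ψ‖ * (1 + c)) (fun k => abs_nonneg _) (fun n => ?_)
  have h1 : ∑ k ∈ Finset.range n, |B.indicator (fun j => ψ (x j)) k|
      = ∑ k ∈ (Finset.range n).filter (· ∈ B), |ψ (x k)| := by
    rw [Finset.sum_filter]
    refine Finset.sum_congr rfl fun k _ => ?_
    by_cases h : k ∈ B <;> simp [Set.indicator_apply, h]
  rw [h1]
  exact ser_partial_abs hB hc ψ (fun k hk => (Finset.mem_filter.1 (by exact_mod_cast hk)).2)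

lemma ser_summable (hB : GoodSgn x c B) (hc : 0 ≤ c) (ψ : Dual ℝ X) :
    Summable (fun k => B.indicator (fun j => ψ (x j)) k) := by
  refine Summable.of_norm ?_
  simpa [Real.norm_eq_abs] using ser_summable_abs hB hc ψ

lemma ser_abs_le (hB : GoodSgn x c B) (hc : 0 ≤ c) (ψ : Dual ℝ X) :
    |SER x ψ B| ≤ ‖ψ‖ * (1 + c) := by
  classical
  set f : ℕ → ℝ := fun k => B.indicator (fun j => ψ (x j)) k with hf
  have hs := ser_summable_abs hB hc ψ
  have hs' : Summable (fun k => ‖f k‖) := by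
    simpa only [hf, Real.norm_eq_abs] using hs
  have h1' := norm_tsum_le_tsum_norm hs'
  simp only [Real.norm_eq_abs] at h1'
  have h1 : |SER x ψ B| ≤ ∑' k, |f k| := h1'
  refine h1.trans ?_
  refine Summable.tsum_le_of_sum_range_le (ser_summable_abs hB hc ψ) (fun n => ?_)
  have h2 : ∑ k ∈ Finset.range n, |B.indicator (fun j => ψ (x j)) k|
      = ∑ k ∈ (Finset.range n).filter (· ∈ B), |ψ (x k)| := by
    rw [Finset.sum_filter]
    refine Finset.sum_congr rfl fun k _ => ?_
    by_cases h : k ∈ B <;> simp [Set.indicator_apply, h]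
  rw [h2]
  exact ser_partial_abs hB hc ψ (fun k hk => (Finset.mem_filter.1 (by exact_mod_cast hk)).2)

lemma ser_add (hB : GoodSgn x c B) (hc : 0 ≤ c) (ψ₁ ψ₂ : Dual ℝ X) :
    SER x (ψ₁ + ψ₂) B = SER x ψ₁ B + SER x ψ₂ B := by
  unfold SER
  rw [← Summable.tsum_add (ser_summable hB hc ψ₁) (ser_summable hB hc ψ₂)]
  congr 1
  funext k
  by_cases h : k ∈ B <;> simp [Set.indicator_apply, h]

lemma ser_smul (a : ℝ) (ψ : Dual ℝ X) :
    SER x (a • ψ) B = a * SER x ψ B := by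
  unfold SER
  rw [← tsum_mul_left]
  congr 1
  funext k
  by_cases h : k ∈ B <;> simp [Set.indicator_apply, h]

/-- The element of the bidual given by `f ↦ ∑_{k ∈ B} f (x k)`. -/
noncomputable def Xi (x : ℕ → X) (B : Set ℕ) (hB : GoodSgn x 1 B) :
    Dual ℝ (Dual ℝ X) :=
  LinearMap.mkContinuous
    { toFun := fun ψ => SER x ψ B
      map_add' := fun ψ₁ ψ₂ => ser_add hB one_pos.le ψ₁ ψ₂
      map_smul' := fun a ψ => ser_smul a ψ }
    2 (fun ψ => by
      have := ser_abs_le hB one_pos.le ψ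
      rw [Real.norm_eq_abs]
      calc |SER x ψ B| ≤ ‖ψ‖ * (1 + 1) := this
        _ = 2 * ‖ψ‖ := by ring)

@[simp] lemma Xi_apply (hB : GoodSgn x 1 B) (ψ : Dual ℝ X) :
    Xi x B hB ψ = SER x ψ B := rfl

lemma xi_norm_le (hB1 : GoodSgn x 1 B) (hBc : GoodSgn x c B) (hc : 0 ≤ c) :
    ‖Xi x B hB1‖ ≤ 1 + c := by
  refine ContinuousLinearMap.opNorm_le_bound _ (by linarith) (fun ψ => ?_)
  rw [Xi_apply, Real.norm_eq_abs]
  calc |SER x ψ B| ≤ ‖ψ‖ * (1 + c) := ser_abs_le hBc hc ψ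
    _ = (1 + c) * ‖ψ‖ := by ring

/-- Main norm bound: positive-sign sums with `v` control `‖ι v + Ξ_B‖`. -/
lemma xi_add_norm_le (hB1 : GoodSgn x 1 B) (v : X) {d : ℝ} (hd : 0 ≤ d)
    (hpos : ∀ F : Finset ℕ, F.Nonempty → ↑F ⊆ B → ‖v + ∑ k ∈ F, x k‖ ≤ max ‖v‖ 1 + d) :
    ‖inclusionInDoubleDual ℝ X v + Xi x B hB1‖ ≤ max ‖v‖ 1 + d := by
  classical
  have hM : (0:ℝ) ≤ max ‖v‖ 1 + d := by
    have := le_max_right ‖v‖ 1; linarith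
  refine ContinuousLinearMap.opNorm_le_bound _ hM (fun ψ => ?_)
  have happ : (inclusionInDoubleDual ℝ X v + Xi x B hB1) ψ = ψ v + SER x ψ B := by
    simp [NormedSpace.dual_def]
  rw [happ, Real.norm_eq_abs]
  -- limit of partial sums
  have hsum := ser_summable hB1 one_pos.le ψ
  have htend : Tendsto (fun n => ψ v + ∑ k ∈ Finset.range n,
      B.indicator (fun j => ψ (x j)) k) atTop (𝓝 (ψ v + SER x ψ B)) :=
    (hsum.hasSum.tendsto_sum_nat).const_add _
  have hbnd : ∀ n, |ψ v + ∑ k ∈ Finset.range n, B.indicator (fun j => ψ (x j)) k|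
      ≤ (max ‖v‖ 1 + d) * ‖ψ‖ := by
    intro n
    rw [ser_range_sum]
    set G := (Finset.range n).filter (· ∈ B) with hG
    have h1 : ψ v + ψ (∑ k ∈ G, x k) = ψ (v + ∑ k ∈ G, x k) := by
      rw [map_add]
    rw [h1]
    have h2 : ‖v + ∑ k ∈ G, x k‖ ≤ max ‖v‖ 1 + d := by
      rcases G.eq_empty_or_nonempty with hGe | hGne
      · rw [hGe]
        simp only [Finset.sum_empty, add_zero]
        have := le_max_left ‖v‖ 1; linarith
      · exact hpos G hGne (fun k hk => (Finset.mem_filter.1 (by exact_mod_cast hk)).2)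
    calc |ψ (v + ∑ k ∈ G, x k)| ≤ ‖ψ‖ * ‖v + ∑ k ∈ G, x k‖ := ψ.le_opNorm _
      _ ≤ ‖ψ‖ * (max ‖v‖ 1 + d) := mul_le_mul_of_nonneg_left h2 (norm_nonneg ψ)
      _ = (max ‖v‖ 1 + d) * ‖ψ‖ := by ring
  exact le_of_tendsto htend.abs (Filter.Eventually.of_forall hbnd)

/-- Splitting off an initial segment. -/
lemma ser_split (hB : GoodSgn x 1 B) (ψ : Dual ℝ X) (m : ℕ) [DecidablePred (· ∈ B)] :
    SER x ψ B = ψ (∑ k ∈ (Finset.range m).filter (· ∈ B), x k)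
      + SER x ψ (B ∩ {k | m ≤ k}) := by
  classical
  have hBsub : GoodSgn x 1 (B ∩ {k | m ≤ k}) := hB.mono Set.inter_subset_left
  have hfun : ∀ k, B.indicator (fun j => ψ (x j)) k
      = (if k < m then B.indicator (fun j => ψ (x j)) k else 0)
        + (B ∩ {k | m ≤ k}).indicator (fun j => ψ (x j)) k := by
    intro k
    by_cases h1 : k ∈ B
    · by_cases h2 : k < m
      · have hnot : k ∉ B ∩ {k | m ≤ k} := by
          intro hc
          have : m ≤ k := hc.2
          omega
        simp [Set.indicator_apply, h1, h2, hnot]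
      · have hmem : k ∈ B ∩ {k | m ≤ k} := ⟨h1, not_lt.1 h2⟩
        simp [Set.indicator_apply, h1, h2, hmem]
    · have hnot : k ∉ B ∩ {k | m ≤ k} := fun hc => h1 hc.1
      simp [Set.indicator_apply, h1, hnot]
  have hs1 : Summable (fun k => if k < m then B.indicator (fun j => ψ (x j)) k else 0) := by
    refine summable_of_ne_finset_zero (s := Finset.range m) (fun k hk => ?_)
    rw [if_neg (fun hlt => hk (Finset.mem_range.2 hlt))]
  have hs2 := ser_summable hBsub one_pos.le ψ
  have h3 : SER x ψ B = (∑' k, if k < m then B.indicator (fun j => ψ (x j)) k else 0)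
      + SER x ψ (B ∩ {k | m ≤ k}) := by
    unfold SER
    rw [← Summable.tsum_add hs1 hs2]
    congr 1
    funext k
    exact hfun k
  rw [h3]
  congr 1
  rw [tsum_eq_sum (s := Finset.range m) (fun k hk => by
    rw [if_neg (fun hlt => hk (Finset.mem_range.2 hlt))])]
  rw [← ser_range_sum (B := B) ψ m]
  refine Finset.sum_congr rfl fun k hk => if_pos (Finset.mem_range.1 hk)

end Series

section TCon
variable {X : Type*} [NormedAddCommGroup X] [NormedSpace ℝ X] {U : Ultrafilter ℕ}

lemma exists_good_set (hU : SelectiveUltrafilter U) (x : ℕ → X)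
    (hx2 : ∀ v : X, Tendsto (fun n => ‖v + x n‖) atTop (𝓝 (max ‖v‖ 1)))
    (v : X) {ε : ℝ} (hε : 0 < ε) :
    ∃ T ∈ U,
      (∀ F : Finset ℕ, F.Nonempty → ↑F ⊆ T → ∀ σ : ℕ → ℝ, SgnFun σ →
        ‖∑ k ∈ F, σ k • x k‖ ≤ 1 + ε) ∧
      (∀ F : Finset ℕ, F.Nonempty → ↑F ⊆ T → ∀ σ : ℕ → ℝ, SgnFun σ →
        ‖v + ∑ k ∈ F, σ k • x k‖ ≤ max ‖v‖ 1 + ε) ∧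
      (∀ t ∈ T, max ‖v‖ 1 - ε ≤ ‖v + x t‖) := by
  classical
  -- the finite approximation sets
  let W : ℕ → Finset X := fun m =>
    Nat.rec ({0, v, -v} : Finset X)
      (fun j Wj => Wj ∪ Wj.image (· + x j) ∪ Wj.image (· - x j)) m
  have hWstep : ∀ j, W (j+1) = W j ∪ (W j).image (· + x j) ∪ (W j).image (· - x j) :=
    fun _ => rfl
  have hW0 : W 0 = ({0, v, -v} : Finset X) := rfl
  have hWneg : ∀ m, ∀ w ∈ W m, -w ∈ W m := by
    intro m
    induction m with
    | zero =>
        intro w hw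
        have hw' : w = 0 ∨ w = v ∨ w = -v := by
          simpa only [hW0, Finset.mem_insert, Finset.mem_singleton] using hw
        have : -w = 0 ∨ -w = v ∨ -w = -v := by
          rcases hw' with h | h | h
          · left; rw [h, neg_zero]
          · right; right; rw [h]
          · right; left; rw [h, neg_neg]
        simpa only [hW0, Finset.mem_insert, Finset.mem_singleton] using this
    | succ j ih =>
        intro w hw
        rw [hWstep] at hw ⊢
        simp only [Finset.mem_union, Finset.mem_image] at hw ⊢
        rcases hw with (h | ⟨u, hu, rfl⟩) | ⟨u, hu, rfl⟩
        · exact Or.inl (Or.inl (ih w h))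
        · exact Or.inr ⟨-u, ih u hu, by abel⟩
        · exact Or.inl (Or.inr ⟨-u, ih u hu, by abel⟩)
  have hWmem : ∀ m (F : Finset ℕ), F ⊆ Finset.range m → ∀ σ : ℕ → ℝ, SgnFun σ →
      ∀ θ : ℝ, (θ = 0 ∨ θ = 1 ∨ θ = -1) → θ • v + ∑ k ∈ F, σ k • x k ∈ W m := by
    intro m
    induction m with
    | zero =>
        intro F hF σ hσ θ hθ
        have hFe : F = ∅ := by
          rw [Finset.range_zero] at hF
          exact Finset.subset_empty.1 hF
        subst hFe
        have : θ • v = 0 ∨ θ • v = v ∨ θ • v = -v := by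
          rcases hθ with h | h | h
          · left; rw [h, zero_smul]
          · right; left; rw [h, one_smul]
          · right; right; rw [h, neg_one_smul]
        rw [Finset.sum_empty, add_zero]
        simpa only [hW0, Finset.mem_insert, Finset.mem_singleton] using this
    | succ j ih =>
        intro F hF σ hσ θ hθ
        by_cases hj : j ∈ F
        · have hsub : F.erase j ⊆ Finset.range j := by
            intro k hk
            have h1 := Finset.mem_range.1 (hF (Finset.mem_of_mem_erase hk))
            have h2 := Finset.ne_of_mem_erase hk
            exact Finset.mem_range.2 (by omega)
          have hw' := ih (F.erase j) hsub σ hσ θ hθ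
          have hsplit : ∑ k ∈ F, σ k • x k = (∑ k ∈ F.erase j, σ k • x k) + σ j • x j :=
            (Finset.sum_erase_add F _ hj).symm
          rw [hWstep]
          simp only [Finset.mem_union, Finset.mem_image]
          rcases hσ j with h1 | h1
          · refine Or.inl (Or.inr ⟨θ • v + ∑ k ∈ F.erase j, σ k • x k, hw', ?_⟩)
            rw [hsplit, h1, one_smul]
            abel
          · refine Or.inr ⟨θ • v + ∑ k ∈ F.erase j, σ k • x k, hw', ?_⟩
            rw [hsplit, h1, neg_one_smul]
            abel
        · have hsub : F ⊆ Finset.range j := by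
            intro k hk
            have h1 := Finset.mem_range.1 (hF hk)
            have hne : k ≠ j := by rintro rfl; exact hj hk
            exact Finset.mem_range.2 (by omega)
          rw [hWstep]
          exact Finset.mem_union_left _ (Finset.mem_union_left _ (ih F hsub σ hσ θ hθ))
  -- tolerances
  let τ : ℕ → ℝ := fun m => ε / 16 * (1 / 2) ^ m
  have hτpos : ∀ m, 0 < τ m := fun m => by positivity
  have hτsum : ∀ G : Finset ℕ, ∑ k ∈ G, τ k ≤ ε / 8 := by
    intro G
    rcases G.eq_empty_or_nonempty with rfl | hG
    · simp; positivity
    · have hsub : G ⊆ Finset.range (G.max' hG + 1) := by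
        intro k hk
        exact Finset.mem_range.2 (Nat.lt_succ_of_le (G.le_max' k hk))
      have h1 : ∑ k ∈ G, τ k ≤ ∑ k ∈ Finset.range (G.max' hG + 1), τ k :=
        Finset.sum_le_sum_of_subset_of_nonneg hsub (fun k _ _ => (hτpos k).le)
      have h2 : ∑ k ∈ Finset.range (G.max' hG + 1), τ k
          = ε / 16 * ∑ k ∈ Finset.range (G.max' hG + 1), (1 / 2 : ℝ) ^ k := by
        rw [Finset.mul_sum]
      have h3 := sum_geometric_two_le (G.max' hG + 1)
      calc ∑ k ∈ G, τ k ≤ ε / 16 * ∑ k ∈ Finset.range (G.max' hG + 1), (1/2:ℝ)^k := by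
            rw [← h2]; exact h1
        _ ≤ ε / 16 * 2 := by nlinarith
        _ ≤ ε / 8 := by linarith
  -- thresholds
  have hev : ∀ m : ℕ, ∃ N : ℕ, ∀ n ≥ N, ∀ w ∈ W (m+1), ‖w + x n‖ ≤ max ‖w‖ 1 + τ m := by
    intro m
    have h1 : ∀ᶠ n in atTop, ∀ w ∈ W (m+1), ‖w + x n‖ ≤ max ‖w‖ 1 + τ m := by
      rw [Finset.eventually_all]
      intro w _
      filter_upwards [(hx2 w).eventually_lt_const (lt_add_of_pos_right _ (hτpos m))] with n hn
      exact hn.le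
    exact eventually_atTop.1 h1
  let g : ℕ → ℕ := fun m => (hev m).choose
  have hg : ∀ m, ∀ n ≥ g m, ∀ w ∈ W (m+1), ‖w + x n‖ ≤ max ‖w‖ 1 + τ m :=
    fun m => (hev m).choose_spec
  have hbase : ∃ N0 : ℕ, ∀ n ≥ N0,
      (∀ w ∈ W 0, ‖w + x n‖ ≤ max ‖w‖ 1 + ε/8) ∧ max ‖v‖ 1 - ε ≤ ‖v + x n‖ := by
    have h1 : ∀ᶠ n in atTop, ∀ w ∈ W 0, ‖w + x n‖ ≤ max ‖w‖ 1 + ε/8 := by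
      rw [Finset.eventually_all]
      intro w _
      filter_upwards [(hx2 w).eventually_lt_const (lt_add_of_pos_right _ (by positivity : (0:ℝ) < ε/8))] with n hn
      exact hn.le
    have h2 : ∀ᶠ n in atTop, max ‖v‖ 1 - ε ≤ ‖v + x n‖ := by
      filter_upwards [(hx2 v).eventually_const_lt (by linarith : max ‖v‖ 1 - ε < max ‖v‖ 1)] with n hn
      exact hn.le
    exact eventually_atTop.1 (h1.and h2)
  obtain ⟨N0, hN0⟩ := hbase
  obtain ⟨A, hA, hApair⟩ := sel_qlemma hU g
  refine ⟨A ∩ {n | N0 ≤ n}, Filter.inter_mem hA (sel_le_atTop hU (mem_atTop N0)), ?_⟩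
  set T : Set ℕ := A ∩ {n | N0 ≤ n} with hT
  -- the key induction
  have key : ∀ (p : ℕ) (F : Finset ℕ), F.card ≤ p → ∀ (hFne : F.Nonempty), ↑F ⊆ T →
      ∀ σ : ℕ → ℝ, SgnFun σ → ∀ θ : ℝ, (θ = 0 ∨ θ = 1 ∨ θ = -1) →
      ‖θ • v + ∑ k ∈ F, σ k • x k‖
        ≤ max ‖θ • v‖ 1 + (ε/8 + ∑ k ∈ F.erase (F.max' hFne), τ k) := by
    intro p
    induction p with
    | zero =>
        intro F hcard hFne
        exact absurd (Finset.card_pos.2 hFne) (by omega)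
    | succ p ih =>
        intro F hcard hFne hFT σ hσ θ hθ
        set n := F.max' hFne with hn
        have hnF : n ∈ F := F.max'_mem hFne
        have hsplit : ∑ k ∈ F, σ k • x k = (∑ k ∈ F.erase n, σ k • x k) + σ n • x n :=
          (Finset.sum_erase_add F _ hnF).symm
        have hTn : n ∈ T := hFT hnF
        by_cases hF' : (F.erase n).Nonempty
        · set m := (F.erase n).max' hF' with hm
          have hmF' : m ∈ F.erase n := Finset.max'_mem _ hF'
          have hmn : m < n := by
            have h1 : m ∈ F := Finset.mem_of_mem_erase hmF'
            have h2 : m ≠ n := Finset.ne_of_mem_erase hmF'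
            exact lt_of_le_of_ne (F.le_max' m h1) h2
          have hTm : m ∈ T := hFT (Finset.mem_of_mem_erase hmF')
          have hsub : F.erase n ⊆ Finset.range (m + 1) := by
            intro k hk
            exact Finset.mem_range.2 (Nat.lt_succ_of_le ((F.erase n).le_max' k hk))
          have hw : θ • v + ∑ k ∈ F.erase n, σ k • x k ∈ W (m + 1) :=
            hWmem (m + 1) (F.erase n) hsub σ hσ θ hθ
          have hcard' : (F.erase n).card ≤ p := by
            rw [Finset.card_erase_of_mem hnF]
            omega
          have hIH := ih (F.erase n) hcard' hF'
            (subset_trans (Finset.coe_subset.2 (Finset.erase_subset _ _)) hFT) σ hσ θ hθ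
          have hgmn : g m < n := hApair m hTm.1 n hTn.1 hmn
          set w := θ • v + ∑ k ∈ F.erase n, σ k • x k with hwdef
          have hstep : ‖w + σ n • x n‖ ≤ max ‖w‖ 1 + τ m := by
            rcases hσ n with h1 | h1
            · rw [h1, one_smul]
              exact hg m n (le_of_lt hgmn) w hw
            · rw [h1, neg_one_smul, ← sub_eq_add_neg]
              have h2 : ‖w - x n‖ = ‖-w + x n‖ := by
                rw [← norm_neg (w - x n), neg_sub, sub_eq_neg_add]
              rw [h2]
              have h3 := hg m n (le_of_lt hgmn) (-w) (hWneg (m + 1) w hw)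
              rwa [norm_neg] at h3
          have hw1 : max ‖w‖ 1 ≤ max ‖θ • v‖ 1 + (ε/8 + ∑ k ∈ (F.erase n).erase m, τ k) := by
            have hnonneg : (0:ℝ) ≤ ε/8 + ∑ k ∈ (F.erase n).erase m, τ k := by
              have := Finset.sum_nonneg (fun k (_ : k ∈ (F.erase n).erase m) => (hτpos k).le)
              linarith
            refine max_le ?_ ?_
            · exact hIH
            · have : (1:ℝ) ≤ max ‖θ • v‖ 1 := le_max_right _ _
              linarith
          have hτeq : (∑ k ∈ (F.erase n).erase m, τ k) + τ m = ∑ k ∈ F.erase n, τ k :=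
            Finset.sum_erase_add _ _ hmF'
          calc ‖θ • v + ∑ k ∈ F, σ k • x k‖ = ‖w + σ n • x n‖ := by
                rw [hwdef, hsplit, add_assoc]
            _ ≤ max ‖w‖ 1 + τ m := hstep
            _ ≤ max ‖θ • v‖ 1 + (ε/8 + ∑ k ∈ (F.erase n).erase m, τ k) + τ m := by linarith
            _ = max ‖θ • v‖ 1 + (ε/8 + ∑ k ∈ F.erase n, τ k) := by
                rw [← hτeq]; ring
        · -- singleton
          have hFsing : F = {n} := by
            have h1 : F ⊆ {n} := by
              intro k hk
              by_contra hk2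
              have hkn : k ≠ n := by simpa using hk2
              exact hF' ⟨k, Finset.mem_erase.2 ⟨hkn, hk⟩⟩
            exact Finset.Subset.antisymm h1 (Finset.singleton_subset_iff.2 hnF)
          have hN0n : N0 ≤ n := hTn.2
          have hbase_n := hN0 n hN0n
          have hbw : ∀ w ∈ W 0, ‖w + x n‖ ≤ max ‖w‖ 1 + ε/8 := hbase_n.1
          have hθW : θ • v ∈ W 0 := by
            rw [hW0]
            simp only [Finset.mem_insert, Finset.mem_singleton]
            rcases hθ with h | h | h
            · left; rw [h, zero_smul]
            · right; left; rw [h, one_smul]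
            · right; right; rw [h, neg_one_smul]
          have hstep : ‖θ • v + σ n • x n‖ ≤ max ‖θ • v‖ 1 + ε/8 := by
            rcases hσ n with h1 | h1
            · rw [h1, one_smul]
              exact hbw _ hθW
            · rw [h1, neg_one_smul, ← sub_eq_add_neg]
              have h2 : ‖θ • v - x n‖ = ‖-(θ • v) + x n‖ := by
                rw [← norm_neg (θ • v - x n), neg_sub, sub_eq_neg_add]
              rw [h2]
              have h3 := hbw (-(θ • v)) (hWneg 0 _ hθW)
              rwa [norm_neg] at h3
          have hsum_eq : ∑ k ∈ F, σ k • x k = σ n • x n := by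
            rw [hFsing, Finset.sum_singleton]
          have herase : F.erase n = ∅ := by rw [hFsing]; simp
          rw [hsum_eq, herase]
          simpa using hstep
  -- conclusions
  have hfinal : ∀ (F : Finset ℕ) (hFne : F.Nonempty), ↑F ⊆ T →
      ∀ σ : ℕ → ℝ, SgnFun σ → ∀ θ : ℝ, (θ = 0 ∨ θ = 1 ∨ θ = -1) →
      ‖θ • v + ∑ k ∈ F, σ k • x k‖ ≤ max ‖θ • v‖ 1 + ε := by
    intro F hFne hFT σ hσ θ hθ
    have h1 := key F.card F le_rfl hFne hFT σ hσ θ hθ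
    have h2 := hτsum (F.erase (F.max' hFne))
    have h3 : ε/8 + ε/8 ≤ ε := by linarith
    linarith
  refine ⟨?_, ?_, ?_⟩
  · intro F hFne hFT σ hσ
    have h1 := hfinal F hFne hFT σ hσ 0 (Or.inl rfl)
    rw [zero_smul, zero_add, norm_zero] at h1
    simpa using h1
  · intro F hFne hFT σ hσ
    have h1 := hfinal F hFne hFT σ hσ 1 (Or.inr (Or.inl rfl))
    rwa [one_smul] at h1
  · intro t ht
    exact (hN0 t ht.2).2
end TCon

lemma le_of_forall_le_add_tendsto {a b : ℝ} {t : ℕ → ℝ}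
    (h : ∀ m, a ≤ b + t m) (ht : Tendsto t atTop (𝓝 0)) : a ≤ b := by
  have h1 : Tendsto (fun m => b + t m) atTop (𝓝 (b + 0)) := tendsto_const_nhds.add ht
  have h2 := ge_of_tendsto h1 (Filter.Eventually.of_forall h)
  rwa [add_zero] at h2

section Main
variable {X : Type*} [NormedAddCommGroup X] [NormedSpace ℝ X]

/-- generic indicator-series bound from partial sums -/
lemma ind_tsum_abs_le {B : Set ℕ} {f : ℕ → ℝ} {C : ℝ} (hC : 0 ≤ C)
    (h : ∀ F : Finset ℕ, ↑F ⊆ B → ∑ k ∈ F, |f k| ≤ C) :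
    Summable (fun k => B.indicator f k) ∧ |∑' k, B.indicator f k| ≤ C := by
  classical
  have hpart : ∀ n, ∑ k ∈ Finset.range n, |B.indicator f k| ≤ C := by
    intro n
    have h1 : ∑ k ∈ Finset.range n, |B.indicator f k|
        = ∑ k ∈ (Finset.range n).filter (· ∈ B), |f k| := by
      rw [Finset.sum_filter]
      refine Finset.sum_congr rfl fun k _ => ?_
      by_cases hk : k ∈ B <;> simp [Set.indicator_apply, hk]
    rw [h1]
    exact h _ (fun k hk => (Finset.mem_filter.1 (by exact_mod_cast hk)).2)
  have habs : Summable (fun k => |B.indicator f k|) :=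
    summable_of_sum_range_le (c := C) (fun k => abs_nonneg _) hpart
  have hsumm : Summable (fun k => B.indicator f k) := by
    refine Summable.of_norm ?_
    simpa [Real.norm_eq_abs] using habs
  refine ⟨hsumm, ?_⟩
  have h1 : |∑' k, B.indicator f k| ≤ ∑' k, |B.indicator f k| := by
    have := norm_tsum_le_tsum_norm (f := fun k => B.indicator f k)
      (by simpa [Real.norm_eq_abs] using habs)
    simpa [Real.norm_eq_abs] using this
  exact h1.trans (Summable.tsum_le_of_sum_range_le habs hpart)

variable (x : ℕ → X) (U : Ultrafilter ℕ)

/-- the directed type of good sets in U -/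
def DD : Type := {B : Set ℕ // B ∈ U ∧ GoodSgn x 1 B}

def cone (B₀ : DD x U) : Set (DD x U) := {B : DD x U | B.1 ⊆ B₀.1}

noncomputable def coneF : Filter (DD x U) := ⨅ B₀ : DD x U, 𝓟 (cone x U B₀)

lemma coneF_neBot (hne : Nonempty (DD x U)) : (coneF x U).NeBot := by
  haveI := hne
  refine Filter.iInf_neBot_of_directed ?_ ?_
  · intro B₁ B₂
    refine ⟨⟨B₁.1 ∩ B₂.1, Filter.inter_mem B₁.2.1 B₂.2.1,
      B₁.2.2.mono Set.inter_subset_left⟩, ?_, ?_⟩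
    · exact Filter.principal_mono.2 (fun B hB => Set.Subset.trans hB Set.inter_subset_left)
    · exact Filter.principal_mono.2 (fun B hB => Set.Subset.trans hB Set.inter_subset_right)
  · intro B₀
    exact Filter.principal_neBot_iff.2 ⟨B₀, Set.Subset.rfl⟩

noncomputable def WW (hne : Nonempty (DD x U)) : Ultrafilter (DD x U) :=
  haveI := coneF_neBot x U hne
  Ultrafilter.of (coneF x U)

lemma cone_mem_WW (hne : Nonempty (DD x U)) (B₀ : DD x U) :
    cone x U B₀ ∈ WW x U hne := by
  haveI := coneF_neBot x U hne
  exact Ultrafilter.of_le (coneF x U) (Filter.mem_iInf_of_mem B₀ (Filter.mem_principal_self _))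

/-- the components of h -/
noncomputable def hBF (B : DD x U) (φ : Dual ℝ (Dual ℝ (Dual ℝ X))) : ℝ :=
  φ (Xi x B.1 B.2.2) - SER x (φ.comp (inclusionInDoubleDual ℝ X)) B.1

lemma psi_norm_le (φ : Dual ℝ (Dual ℝ (Dual ℝ X))) :
    ‖φ.comp (inclusionInDoubleDual ℝ X)‖ ≤ ‖φ‖ := by
  refine ContinuousLinearMap.opNorm_le_bound _ (norm_nonneg φ) (fun w => ?_)
  calc ‖φ (inclusionInDoubleDual ℝ X w)‖ ≤ ‖φ‖ * ‖inclusionInDoubleDual ℝ X w‖ := φ.le_opNorm _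
    _ ≤ ‖φ‖ * ‖w‖ := mul_le_mul_of_nonneg_left (double_dual_bound ℝ X w) (norm_nonneg φ)

lemma hBF_abs_le (B : DD x U) (φ : Dual ℝ (Dual ℝ (Dual ℝ X))) :
    |hBF x U B φ| ≤ 4 * ‖φ‖ := by
  have h1 : |φ (Xi x B.1 B.2.2)| ≤ ‖φ‖ * 2 := by
    calc |φ (Xi x B.1 B.2.2)| ≤ ‖φ‖ * ‖Xi x B.1 B.2.2‖ := φ.le_opNorm _
      _ ≤ ‖φ‖ * 2 := by
          have := xi_norm_le B.2.2 B.2.2 one_pos.le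
          have h2 : (1:ℝ) + 1 = 2 := by norm_num
          exact mul_le_mul_of_nonneg_left (by rw [← h2]; exact this) (norm_nonneg φ)
  have h2 : |SER x (φ.comp (inclusionInDoubleDual ℝ X)) B.1|
      ≤ ‖φ‖ * 2 := by
    have := ser_abs_le B.2.2 one_pos.le (φ.comp (inclusionInDoubleDual ℝ X))
    have h3 := psi_norm_le (X := X) φ
    have h4 : ‖φ.comp (inclusionInDoubleDual ℝ X)‖ * (1+1) ≤ ‖φ‖ * 2 := by nlinarith [norm_nonneg (φ.comp (inclusionInDoubleDual ℝ X))]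
    linarith [this]
  unfold hBF
  calc |φ (Xi x B.1 B.2.2) - SER x (φ.comp (inclusionInDoubleDual ℝ X)) B.1|
      ≤ |φ (Xi x B.1 B.2.2)| + |SER x (φ.comp (inclusionInDoubleDual ℝ X)) B.1| := by
        rw [sub_eq_add_neg]
        exact (abs_add_le _ _).trans (by rw [abs_neg])
    _ ≤ 4 * ‖φ‖ := by linarith


/-- splitting of `Xi` at level `m` -/
lemma xi_split {B : Set ℕ} (hB : GoodSgn x 1 B) (m : ℕ) [DecidablePred (· ∈ B)] :
    Xi x B hB = inclusionInDoubleDual ℝ X (∑ k ∈ (Finset.range m).filter (· ∈ B), x k)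
      + Xi x (B ∩ {k | m ≤ k}) (hB.mono Set.inter_subset_left) := by
  ext ψ
  simp only [ContinuousLinearMap.add_apply, Xi_apply, NormedSpace.dual_def]
  exact ser_split hB ψ m

/-- the `hBF` value only depends on tails -/
lemma hBF_tail (B : DD x U) (φ : Dual ℝ (Dual ℝ (Dual ℝ X))) (m : ℕ) :
    hBF x U B φ = φ (Xi x (B.1 ∩ {k | m ≤ k}) (B.2.2.mono Set.inter_subset_left))
      - SER x (φ.comp (inclusionInDoubleDual ℝ X)) (B.1 ∩ {k | m ≤ k}) := by
  classical
  unfold hBF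
  rw [xi_split x B.2.2 m, map_add]
  rw [ser_split (x := x) B.2.2 (φ.comp (inclusionInDoubleDual ℝ X)) m]
  have hcomp : (φ.comp (inclusionInDoubleDual ℝ X))
      (∑ k ∈ (Finset.range m).filter (· ∈ B.1), x k)
      = φ (inclusionInDoubleDual ℝ X (∑ k ∈ (Finset.range m).filter (· ∈ B.1), x k)) := rfl
  rw [hcomp]
  ring

/-- tail of the scalar series tends to zero -/
lemma ser_tail_tendsto {B : Set ℕ} (hB : GoodSgn x 1 B) (ψ : Dual ℝ X) :
    Tendsto (fun m => SER x ψ (B ∩ {k | m ≤ k})) atTop (𝓝 0) := by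
  classical
  have heq : ∀ m : ℕ, SER x ψ (B ∩ {k | m ≤ k})
      = SER x ψ B - ∑ k ∈ Finset.range m, B.indicator (fun j => ψ (x j)) k := by
    intro m
    rw [ser_split (x := x) hB ψ m, ser_range_sum]
    ring
  have h2 : Tendsto (fun m => SER x ψ B - ∑ k ∈ Finset.range m,
      B.indicator (fun j => ψ (x j)) k) atTop (𝓝 (SER x ψ B - SER x ψ B)) := by
    exact tendsto_const_nhds.sub (ser_summable hB one_pos.le ψ).hasSum.tendsto_sum_nat
  rw [sub_self] at h2
  exact h2.congr (fun m => (heq m).symm)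

/-- Upper bound for `φ(ι v) + hBF B φ` on a cone. -/
lemma upper_on_cone {T : Set ℕ} {v : X} {d : ℝ} (hd : 0 ≤ d)
    (hTgood : GoodSgn x 1 T)
    (hpos : ∀ F : Finset ℕ, F.Nonempty → ↑F ⊆ T → ‖v + ∑ k ∈ F, x k‖ ≤ max ‖v‖ 1 + d)
    (B : DD x U) (hBT : B.1 ⊆ T) (φ : Dual ℝ (Dual ℝ (Dual ℝ X))) :
    |φ ((inclusionInDoubleDual ℝ X) v) + hBF x U B φ|
      ≤ (max ‖v‖ 1 + d) * ‖φ‖ := by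
  classical
  set ψ := φ.comp (inclusionInDoubleDual ℝ X) with hψ
  refine le_of_forall_le_add_tendsto (t := fun m => |SER x ψ (B.1 ∩ {k | m ≤ k})|) ?_ ?_
  · intro m
    set B' : Set ℕ := B.1 ∩ {k | m ≤ k} with hB'
    have hB'T : B' ⊆ T := Set.Subset.trans Set.inter_subset_left hBT
    have hB'good : GoodSgn x 1 B' := B.2.2.mono Set.inter_subset_left
    have hkey := hBF_tail x U B φ m
    have h1 : φ ((inclusionInDoubleDual ℝ X) v) + hBF x U B φ
        = φ ((inclusionInDoubleDual ℝ X) v + Xi x B' hB'good) - SER x ψ B' := by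
      rw [hkey, map_add]
      ring
    rw [h1]
    have h2 : |φ ((inclusionInDoubleDual ℝ X) v + Xi x B' hB'good)|
        ≤ ‖φ‖ * (max ‖v‖ 1 + d) := by
      calc |φ ((inclusionInDoubleDual ℝ X) v + Xi x B' hB'good)|
          ≤ ‖φ‖ * ‖(inclusionInDoubleDual ℝ X) v + Xi x B' hB'good‖ := φ.le_opNorm _
        _ ≤ ‖φ‖ * (max ‖v‖ 1 + d) := by
            refine mul_le_mul_of_nonneg_left ?_ (norm_nonneg φ)
            exact xi_add_norm_le hB'good v hd
              (fun F hne hF => hpos F hne (Set.Subset.trans hF hB'T))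
    calc |φ ((inclusionInDoubleDual ℝ X) v + Xi x B' hB'good) - SER x ψ B'|
        ≤ |φ ((inclusionInDoubleDual ℝ X) v + Xi x B' hB'good)| + |SER x ψ B'| := by
          rw [sub_eq_add_neg]
          exact (abs_add_le _ _).trans (by rw [abs_neg])
      _ ≤ (max ‖v‖ 1 + d) * ‖φ‖ + |SER x ψ B'| := by linarith [h2]
  · have := (ser_tail_tendsto x (B := B.1) B.2.2 ψ).abs
    simpa using this

/-- splitting off a single point -/
lemma ser_single_split {B : Set ℕ} (hB : GoodSgn x 1 B) (ψ : Dual ℝ X) {t : ℕ} (ht : t ∈ B) :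
    SER x ψ B = ψ (x t) + SER x ψ (B \ {t}) := by
  classical
  have hfun : ∀ k, B.indicator (fun j => ψ (x j)) k
      = (if k = t then ψ (x t) else 0) + (B \ {t}).indicator (fun j => ψ (x j)) k := by
    intro k
    by_cases h1 : k = t
    · subst h1
      have : k ∉ B \ {k} := fun hc => hc.2 rfl
      simp [Set.indicator_apply, ht, this]
    · by_cases h2 : k ∈ B
      · have : k ∈ B \ {t} := ⟨h2, h1⟩
        simp [Set.indicator_apply, h1, h2, this]
      · have : k ∉ B \ {t} := fun hc => h2 hc.1
        simp [Set.indicator_apply, h1, h2, this]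
  have hs1 : Summable (fun k => if k = t then ψ (x t) else (0:ℝ)) := by
    refine summable_of_ne_finset_zero (s := {t}) (fun k hk => ?_)
    rw [if_neg (by simpa using hk)]
  have hs2 := ser_summable (B := B \ {t}) (hB.mono (Set.diff_subset : B \ {t} ⊆ B)) one_pos.le ψ
  unfold SER
  rw [show (fun k => B.indicator (fun j => ψ (x j)) k)
      = fun k => (if k = t then ψ (x t) else 0) + (B \ {t}).indicator (fun j => ψ (x j)) k
    from funext hfun]
  rw [Summable.tsum_add hs1 hs2, tsum_ite_eq]

end Main

lemma GoodSgn.mono_const {X : Type*} [NormedAddCommGroup X] [NormedSpace ℝ X]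
    {x : ℕ → X} {c c' : ℝ} {B : Set ℕ} (hcc : c ≤ c') (h : GoodSgn x c B) :
    GoodSgn x c' B :=
  fun F hne hF σ hσ => (h F hne hF σ hσ).trans (by linarith)

lemma sgn_one : SgnFun (fun _ => (1:ℝ)) := fun _ => Or.inl rfl

set_option maxHeartbeats 2000000 in
theorem stmt10_aux {X : Type*} [NormedAddCommGroup X] [NormedSpace ℝ X] [CompleteSpace X]
    (hseq : ∃ x : ℕ → X, (∀ n, ‖x n‖ = 1) ∧
      ∀ v : X, Tendsto (fun n => ‖v + x n‖) atTop (𝓝 (max ‖v‖ 1)))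
    (hsel : ∃ U : Ultrafilter ℕ, SelectiveUltrafilter U) :
    ∃ h : Dual ℝ (Dual ℝ (Dual ℝ (Dual ℝ X))), ‖h‖ = 1 ∧
      ∀ x : X, ‖fourthDualEmbed X x + h‖ = max ‖x‖ 1 := by
  classical
  obtain ⟨e, he1, he2⟩ := hseq
  obtain ⟨U, hU⟩ := hsel
  set ι1 : X →L[ℝ] Dual ℝ (Dual ℝ X) := inclusionInDoubleDual ℝ X with hι1
  -- nonempty family of good sets
  obtain ⟨T0, hT0U, hT0good, _, _⟩ := exists_good_set hU e he2 0 one_pos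
  have hT0good' : GoodSgn e 1 T0 := hT0good
  have hne : Nonempty (DD e U) := ⟨⟨T0, hT0U, hT0good'⟩⟩
  set W' := WW e U hne with hW'
  -- the functional
  have hbnd : ∀ φ : Dual ℝ (Dual ℝ (Dual ℝ X)),
      ∀ᶠ B in (W' : Filter (DD e U)), |hBF e U B φ| ≤ 4 * ‖φ‖ :=
    fun φ => Filter.Eventually.of_forall (fun B => hBF_abs_le e U B φ)
  set hfun : Dual ℝ (Dual ℝ (Dual ℝ X)) → ℝ :=
    fun φ => ulim W' (fun B => hBF e U B φ) with hfundef
  have htends : ∀ φ, Tendsto (fun B => hBF e U B φ) (W' : Filter (DD e U)) (𝓝 (hfun φ)) :=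
    fun φ => tendsto_ulim (hbnd φ)
  have hadd : ∀ φ₁ φ₂, hfun (φ₁ + φ₂) = hfun φ₁ + hfun φ₂ := by
    intro φ₁ φ₂
    have h1 : (fun B => hBF e U B (φ₁ + φ₂))
        = fun B => hBF e U B φ₁ + hBF e U B φ₂ := by
      funext B
      unfold hBF
      rw [ContinuousLinearMap.add_apply, ContinuousLinearMap.add_comp,
        ser_add B.2.2 one_pos.le]
      ring
    rw [hfundef]
    simp only [h1]
    exact ulim_eq ((htends φ₁).add (htends φ₂))
  have hsmul : ∀ (a : ℝ) φ, hfun (a • φ) = a * hfun φ := by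
    intro a φ
    have h1 : (fun B => hBF e U B (a • φ)) = fun B => a * hBF e U B φ := by
      funext B
      unfold hBF
      rw [ContinuousLinearMap.coe_smul', Pi.smul_apply, ContinuousLinearMap.smul_comp,
        ser_smul]
      simp only [smul_eq_mul]
      ring
    rw [hfundef]
    simp only [h1]
    exact ulim_eq ((htends φ).const_mul a)
  have hnormb : ∀ φ, |hfun φ| ≤ ‖φ‖ := by
    intro φ
    have key : ∀ δ : ℝ, 0 < δ → δ ≤ 1 → |hfun φ| ≤ (1 + δ) * ‖φ‖ := by
      intro δ hδ hδ1
      obtain ⟨T, hTU, hTgood, hTv, _⟩ := exists_good_set hU e he2 0 hδ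
      have hTgood1 : GoodSgn e 1 T := GoodSgn.mono_const hδ1 hTgood
      set BT : DD e U := ⟨T, hTU, hTgood1⟩ with hBT
      refine abs_ulim_le (hbnd φ) ?_
      filter_upwards [cone_mem_WW e U hne BT] with B hB
      have hpos : ∀ F : Finset ℕ, F.Nonempty → ↑F ⊆ T →
          ‖(0:X) + ∑ k ∈ F, e k‖ ≤ max ‖(0:X)‖ 1 + δ := by
        intro F hFne hFT
        have := hTv F hFne hFT (fun _ => 1) sgn_one
        simpa using this
      have h0 := upper_on_cone e U (v := (0:X)) (d := δ) hδ.le hTgood1 hpos B hB φ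
      have h1 : (max ‖(0:X)‖ 1 + δ) = 1 + δ := by simp
      rw [h1] at h0
      have h2 : φ (ι1 0) = 0 := by rw [map_zero, map_zero]
      rw [hι1] at h2
      rw [h2, zero_add] at h0
      exact h0
    refine le_of_forall_pos_le_add ?_
    intro ε hε
    have hδ : 0 < min 1 (ε / (‖φ‖ + 1)) := by
      apply lt_min one_pos
      positivity
    have h1 := key _ hδ (min_le_left _ _)
    have h2 : min 1 (ε / (‖φ‖ + 1)) * ‖φ‖ ≤ ε := by
      have h3 : min 1 (ε / (‖φ‖ + 1)) ≤ ε / (‖φ‖ + 1) := min_le_right _ _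
      have h4 : ‖φ‖ ≤ ‖φ‖ + 1 := by linarith
      have h5 : 0 ≤ ‖φ‖ := norm_nonneg φ
      calc min 1 (ε / (‖φ‖ + 1)) * ‖φ‖ ≤ ε / (‖φ‖ + 1) * ‖φ‖ := by
            exact mul_le_mul_of_nonneg_right h3 h5
        _ ≤ ε / (‖φ‖ + 1) * (‖φ‖ + 1) := by
            refine mul_le_mul_of_nonneg_left h4 ?_
            positivity
        _ = ε := by field_simp
    nlinarith [norm_nonneg φ]
  -- the element of the fourth dual
  set hstar : Dual ℝ (Dual ℝ (Dual ℝ (Dual ℝ X))) :=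
    LinearMap.mkContinuous
      { toFun := hfun
        map_add' := hadd
        map_smul' := fun a φ => by simpa [smul_eq_mul] using hsmul a φ }
      1 (fun φ => by
          rw [Real.norm_eq_abs]
          simpa using hnormb φ) with hhstar
  have hstar_apply : ∀ φ, hstar φ = hfun φ := fun φ => rfl
  have happ : ∀ (v : X) (φ : Dual ℝ (Dual ℝ (Dual ℝ X))),
      (fourthDualEmbed X v + hstar) φ = φ (ι1 v) + hfun φ := by
    intro v φ
    have hrfl : (fourthDualEmbed X v) φ = φ (ι1 v) := rfl
    rw [ContinuousLinearMap.add_apply, hstar_apply, hrfl]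
  -- main estimate
  have hmain : ∀ v : X, ‖fourthDualEmbed X v + hstar‖ = max ‖v‖ 1 := by
    intro v
    set M := max ‖v‖ 1 with hM
    have hM1 : (1:ℝ) ≤ M := le_max_right _ _
    -- upper bound
    have hupper : ‖fourthDualEmbed X v + hstar‖ ≤ M := by
      refine le_of_forall_pos_le_add ?_
      intro ε hε
      set δ := min 1 ε with hδdef
      have hδ : 0 < δ := lt_min one_pos hε
      obtain ⟨T, hTU, hTgood, hTv, _⟩ := exists_good_set hU e he2 v hδ
      have hTgood1 : GoodSgn e 1 T := GoodSgn.mono_const (min_le_left _ _) hTgood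
      set BT : DD e U := ⟨T, hTU, hTgood1⟩ with hBT
      have hδε : δ ≤ ε := min_le_right _ _
      refine (ContinuousLinearMap.opNorm_le_bound _ (by positivity) ?_).trans
        (by linarith : M + δ ≤ M + ε)
      intro φ
      rw [happ v φ]
      have hpos : ∀ F : Finset ℕ, F.Nonempty → ↑F ⊆ T →
          ‖v + ∑ k ∈ F, e k‖ ≤ max ‖v‖ 1 + δ := by
        intro F hFne hFT
        have := hTv F hFne hFT (fun _ => 1) sgn_one
        simpa using this
      have hev : ∀ᶠ B in (W' : Filter (DD e U)),
          |φ (ι1 v) + hBF e U B φ| ≤ (M + δ) * ‖φ‖ := by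
        filter_upwards [cone_mem_WW e U hne BT] with B hB
        exact upper_on_cone e U hδ.le hTgood1 hpos B hB φ
      have htt : Tendsto (fun B => φ (ι1 v) + hBF e U B φ) (W' : Filter (DD e U))
          (𝓝 (φ (ι1 v) + hfun φ)) := tendsto_const_nhds.add (htends φ)
      rw [Real.norm_eq_abs]
      exact le_of_tendsto htt.abs hev
    -- lower bound
    have hlower : ∀ δ : ℝ, 0 < δ → δ ≤ 1/2 → M - 5*δ ≤ ‖fourthDualEmbed X v + hstar‖ := by
      intro δ hδ hδhalf
      obtain ⟨T, hTU, hTgood, hTv, hTlow⟩ := exists_good_set hU e he2 v hδ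
      have hTgood1 : GoodSgn e 1 T := GoodSgn.mono_const (by linarith) hTgood
      set BT : DD e U := ⟨T, hTU, hTgood1⟩ with hBT
      -- norming functionals
      have hnz : ∀ t ∈ T, v + e t ≠ 0 := by
        intro t ht
        have h1 := hTlow t ht
        have h2 : (0:ℝ) < ‖v + e t‖ := by
          have h3 : (1:ℝ) ≤ max ‖v‖ 1 := le_max_right _ _
          linarith
        exact norm_pos_iff.1 h2
      have hgex : ∀ t : ℕ, ∃ g : Dual ℝ X, ‖g‖ ≤ 1 ∧ (t ∈ T → g (v + e t) = ‖v + e t‖) := by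
        intro t
        by_cases ht : t ∈ T
        · obtain ⟨g, hga, hgb⟩ := exists_dual_vector ℝ (v + e t) (norm_ne_zero_iff.2 (hnz t ht))
          refine ⟨g, le_of_eq hga, fun _ => by simpa using hgb⟩
        · exact ⟨0, by simp, fun h => absurd h ht⟩
      choose gt hg1 hg2 using hgex
      -- the functional φ₀
      have hgbnd : ∀ ζ : Dual ℝ (Dual ℝ X), ∀ t, |ζ (gt t)| ≤ ‖ζ‖ := by
        intro ζ t
        calc |ζ (gt t)| ≤ ‖ζ‖ * ‖gt t‖ := ζ.le_opNorm _
          _ ≤ ‖ζ‖ * 1 := mul_le_mul_of_nonneg_left (hg1 t) (norm_nonneg ζ)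
          _ = ‖ζ‖ := mul_one _
      have hgev : ∀ ζ : Dual ℝ (Dual ℝ X), ∀ᶠ t in (U : Filter ℕ), |ζ (gt t)| ≤ ‖ζ‖ :=
        fun ζ => Filter.Eventually.of_forall (hgbnd ζ)
      have hgtends : ∀ ζ : Dual ℝ (Dual ℝ X),
          Tendsto (fun t => ζ (gt t)) (U : Filter ℕ) (𝓝 (ulim U (fun t => ζ (gt t)))) :=
        fun ζ => tendsto_ulim (hgev ζ)
      set φ₀ : Dual ℝ (Dual ℝ (Dual ℝ X)) :=
        LinearMap.mkContinuous
          { toFun := fun ζ => ulim U (fun t => ζ (gt t))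
            map_add' := fun ζ₁ ζ₂ => by
              have h1 : (fun t => (ζ₁ + ζ₂) (gt t))
                  = fun t => ζ₁ (gt t) + ζ₂ (gt t) := by
                funext t; rw [ContinuousLinearMap.add_apply]
              simp only [h1]
              exact ulim_eq ((hgtends ζ₁).add (hgtends ζ₂))
            map_smul' := fun a ζ => by
              have h1 : (fun t => (a • ζ) (gt t)) = fun t => a * ζ (gt t) := by
                funext t
                rw [ContinuousLinearMap.coe_smul', Pi.smul_apply, smul_eq_mul]
              simp only [h1, smul_eq_mul, RingHom.id_apply]
              exact ulim_eq ((hgtends ζ).const_mul a) }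
          1 (fun ζ => by
              rw [Real.norm_eq_abs]
              rw [one_mul]
              exact abs_ulim_le (hgev ζ) (hgev ζ)) with hφ₀
      have hφ₀norm : ‖φ₀‖ ≤ 1 := LinearMap.mkContinuous_norm_le _ one_pos.le _
      have hφ₀app : ∀ ζ : Dual ℝ (Dual ℝ X), φ₀ ζ = ulim U (fun t => ζ (gt t)) :=
        fun ζ => rfl
      -- the L values
      have hLval : ∀ k : ℕ, (φ₀.comp ι1) (e k) = ulim U (fun t => gt t (e k)) :=
        fun k => rfl
      have hgw : ∀ t (w : X), |gt t w| ≤ ‖w‖ := by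
        intro t w
        calc |gt t w| ≤ ‖gt t‖ * ‖w‖ := (gt t).le_opNorm w
          _ ≤ 1 * ‖w‖ := mul_le_mul_of_nonneg_right (hg1 t) (norm_nonneg w)
          _ = ‖w‖ := one_mul _
      -- the crucial smallness estimate for signed sums paired with g_t
      have hzkey : ∀ (F : Finset ℕ) (σ : ℕ → ℝ), SgnFun σ → ↑F ⊆ T →
          ∀ t ∈ T, t ∉ F → gt t (∑ k ∈ F, σ k • e k) ≤ 2 * δ := by
        intro F σ hσ hFT t ht htF
        rcases F.eq_empty_or_nonempty with rfl | hFne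
        · simp; linarith
        · set σ' : ℕ → ℝ := fun k => if k = t then 1 else σ k with hσ'
          have hσ'sgn : SgnFun σ' := by
            intro k
            rw [hσ']
            by_cases hk : k = t
            · simp [hk]
            · simpa [hk] using hσ k
          have hsum : ∑ k ∈ insert t F, σ' k • e k = e t + ∑ k ∈ F, σ k • e k := by
            rw [Finset.sum_insert htF]
            congr 1
            · rw [hσ']; simp
            · refine Finset.sum_congr rfl fun k hk => ?_
              have hkt : k ≠ t := fun hc => htF (hc ▸ hk)
              rw [hσ']; simp [hkt]
          have hins : ‖v + ∑ k ∈ insert t F, σ' k • e k‖ ≤ M + δ := by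
            rw [hM]
            refine hTv (insert t F) ⟨t, Finset.mem_insert_self t F⟩ ?_ σ' hσ'sgn
            intro k hk
            rcases Finset.mem_insert.1 (by exact_mod_cast hk) with hk1 | hk1
            · exact hk1 ▸ ht
            · exact hFT (by exact_mod_cast hk1)
          have h1 : gt t (v + e t) + gt t (∑ k ∈ F, σ k • e k)
              = gt t (v + e t + ∑ k ∈ F, σ k • e k) := by
            rw [← map_add]
          have h2 : v + e t + ∑ k ∈ F, σ k • e k = v + ∑ k ∈ insert t F, σ' k • e k := by
            rw [hsum]; abel
          have h3 : gt t (v + e t + ∑ k ∈ F, σ k • e k) ≤ M + δ := by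
            calc gt t (v + e t + ∑ k ∈ F, σ k • e k)
                ≤ |gt t (v + e t + ∑ k ∈ F, σ k • e k)| := le_abs_self _
              _ ≤ ‖v + e t + ∑ k ∈ F, σ k • e k‖ := hgw t _
              _ ≤ M + δ := by rw [h2]; exact hins
          have h4 : gt t (v + e t) = ‖v + e t‖ := hg2 t ht
          have h5 : M - δ ≤ ‖v + e t‖ := by
            have := hTlow t ht
            rw [hM]
            exact this
          linarith
      -- smallness of the L-series partial sums
      have hLabs : ∀ (F : Finset ℕ), ↑F ⊆ T →
          ∑ k ∈ F, |(φ₀.comp ι1) (e k)| ≤ 2 * δ := by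
        intro F hFT
        rcases F.eq_empty_or_nonempty with rfl | hFne
        · simp; linarith
        · set L : ℕ → ℝ := fun k => ulim U (fun t => gt t (e k)) with hL
          have hLk : ∀ k, (φ₀.comp ι1) (e k) = L k := fun k => hLval k
          set σ : ℕ → ℝ := fun k => if 0 ≤ L k then 1 else -1 with hσdef
          have hσ : SgnFun σ := by
            intro k
            by_cases h : 0 ≤ L k <;> simp [hσdef, h]
          have habs : ∀ k, |L k| = σ k * L k := by
            intro k
            by_cases h : 0 ≤ L k
            · rw [abs_of_nonneg h]; simp [hσdef, h]
            · rw [abs_of_neg (not_le.1 h)]; simp [hσdef, h]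
          have h1 : ∑ k ∈ F, |(φ₀.comp ι1) (e k)| = ∑ k ∈ F, σ k * L k := by
            refine Finset.sum_congr rfl fun k _ => ?_
            rw [hLk k, habs k]
          rw [h1]
          have htt : Tendsto (fun t => ∑ k ∈ F, σ k * gt t (e k)) (U : Filter ℕ)
              (𝓝 (∑ k ∈ F, σ k * L k)) := by
            refine tendsto_finset_sum _ (fun k _ => ?_)
            exact (tendsto_ulim (Filter.Eventually.of_forall
              (fun t => hgw t (e k)))).const_mul (σ k)
          have heq : ∀ t, ∑ k ∈ F, σ k * gt t (e k) = gt t (∑ k ∈ F, σ k • e k) := by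
            intro t
            rw [map_sum]
            refine Finset.sum_congr rfl fun k _ => ?_
            rw [ContinuousLinearMap.map_smul, smul_eq_mul]
          have htt2 : Tendsto (fun t => gt t (∑ k ∈ F, σ k • e k)) (U : Filter ℕ)
              (𝓝 (∑ k ∈ F, σ k * L k)) := by
            refine htt.congr (fun t => heq t)
          refine le_of_tendsto htt2 ?_
          have hTF : {t : ℕ | t ∉ F} ∈ (U : Filter ℕ) :=
            sel_compl_finite_mem hU F.finite_toSet
          filter_upwards [hTU, hTF] with t ht htF
          exact hzkey F σ hσ hFT t ht htF
      -- bound for SER with φ₀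
      have hSERb : ∀ B : DD e U, B.1 ⊆ T → |SER e (φ₀.comp ι1) B.1| ≤ 2 * δ := by
        intro B hBT
        have h1 := (ind_tsum_abs_le (B := B.1) (f := fun k => (φ₀.comp ι1) (e k))
          (C := 2 * δ) (by linarith)
          (fun F hF => hLabs F (Set.Subset.trans hF hBT))).2
        exact h1
      -- lower bound for φ₀ applied to ι v + Ξ_B
      have hA : ∀ B : DD e U, B.1 ⊆ T →
          M - 3*δ ≤ φ₀ (ι1 v + Xi e B.1 B.2.2) := by
        intro B hBT
        rw [hφ₀app]
        refine le_ulim (C := ‖ι1 v + Xi e B.1 B.2.2‖)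
          (Filter.Eventually.of_forall (fun t => hgbnd _ t)) ?_
        filter_upwards [B.2.1] with t htB
        have htT : t ∈ T := hBT htB
        have h1 : (ι1 v + Xi e B.1 B.2.2) (gt t) = gt t v + SER e (gt t) B.1 := by
          rw [ContinuousLinearMap.add_apply, Xi_apply, hι1, NormedSpace.dual_def]
        rw [h1]
        have h2 := ser_single_split (x := e) B.2.2 (gt t) htB
        have h3 : |SER e (gt t) (B.1 \ {t})| ≤ 2*δ := by
          refine (ind_tsum_abs_le (B := B.1 \ {t}) (f := fun k => gt t (e k))
            (C := 2*δ) (by linarith) ?_).2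
          intro F hF
          rcases F.eq_empty_or_nonempty with rfl | hFne
          · simp; linarith
          · set σ : ℕ → ℝ := fun k => if 0 ≤ gt t (e k) then 1 else -1 with hσdef
            have hσ : SgnFun σ := by
              intro k
              by_cases h : 0 ≤ gt t (e k) <;> simp [hσdef, h]
            have habs : ∀ k, |gt t (e k)| = σ k * gt t (e k) := by
              intro k
              by_cases h : 0 ≤ gt t (e k)
              · rw [abs_of_nonneg h]; simp [hσdef, h]
              · rw [abs_of_neg (not_le.1 h)]; simp [hσdef, h]
            have h4 : ∑ k ∈ F, |gt t (e k)| = gt t (∑ k ∈ F, σ k • e k) := by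
              rw [map_sum]
              refine Finset.sum_congr rfl fun k _ => ?_
              rw [habs k, ContinuousLinearMap.map_smul, smul_eq_mul]
            rw [h4]
            have hFT : ↑F ⊆ T := by
              intro k hk
              exact hBT (hF hk).1
            have htF : t ∉ F := by
              intro hc
              exact (hF (by exact_mod_cast hc : (t:ℕ) ∈ (↑F : Set ℕ))).2 rfl
            exact hzkey F σ hσ hFT t htT htF
        have h4 : gt t (v + e t) = ‖v + e t‖ := hg2 t htT
        have h5 : M - δ ≤ ‖v + e t‖ := by
          have := hTlow t htT
          rw [hM]
          exact this
        have h6 : gt t v + SER e (gt t) B.1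
            = gt t (v + e t) + SER e (gt t) (B.1 \ {t}) := by
          rw [h2, map_add]
          ring
        rw [h6, h4]
        have h7 := (abs_le.1 h3).1
        linarith
      -- combine on the cone
      have hcomb : ∀ B : DD e U, B ∈ cone e U BT →
          M - 5*δ ≤ φ₀ (ι1 v) + hBF e U B φ₀ := by
        intro B hB
        have hBT' : B.1 ⊆ T := hB
        have h1 := hA B hBT'
        have h2 := hSERb B hBT'
        have h3 : φ₀ (ι1 v) + hBF e U B φ₀
            = φ₀ (ι1 v + Xi e B.1 B.2.2) - SER e (φ₀.comp ι1) B.1 := by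
          unfold hBF
          rw [map_add, hι1]
          ring
        rw [h3]
        have h4 := (abs_le.1 h2).2
        linarith
      -- pass to the limit along W'
      have hlim : M - 5*δ ≤ φ₀ (ι1 v) + hfun φ₀ := by
        refine ge_of_tendsto (tendsto_const_nhds.add (htends φ₀)) ?_
        filter_upwards [cone_mem_WW e U hne BT] with B hB
        exact hcomb B hB
      have hfin : φ₀ (ι1 v) + hfun φ₀ ≤ ‖fourthDualEmbed X v + hstar‖ := by
        have h1 : φ₀ (ι1 v) + hfun φ₀ = (fourthDualEmbed X v + hstar) φ₀ :=
          (happ v φ₀).symm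
        rw [h1]
        calc (fourthDualEmbed X v + hstar) φ₀
            ≤ |(fourthDualEmbed X v + hstar) φ₀| := le_abs_self _
          _ ≤ ‖fourthDualEmbed X v + hstar‖ * ‖φ₀‖ := by
              have := (fourthDualEmbed X v + hstar).le_opNorm φ₀
              rwa [Real.norm_eq_abs] at this
          _ ≤ ‖fourthDualEmbed X v + hstar‖ * 1 :=
              mul_le_mul_of_nonneg_left hφ₀norm (norm_nonneg _)
          _ = ‖fourthDualEmbed X v + hstar‖ := mul_one _
      linarith
    -- conclude the lower bound
    have hlow2 : M ≤ ‖fourthDualEmbed X v + hstar‖ := by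
      by_contra hc
      push_neg at hc
      have hγpos : 0 < M - ‖fourthDualEmbed X v + hstar‖ := by linarith
      have hδpos : 0 < min ((M - ‖fourthDualEmbed X v + hstar‖)/6) (1/2) :=
        lt_min (by linarith) (by norm_num)
      have h1 := hlower _ hδpos (min_le_right _ _)
      have h2 := min_le_left ((M - ‖fourthDualEmbed X v + hstar‖)/6) (1/2)
      linarith
    rw [hM] at hupper hlow2 ⊢
    exact le_antisymm hupper hlow2
  refine ⟨hstar, ?_, hmain⟩
  have h0 := hmain 0
  rw [map_zero, zero_add] at h0
  simpa using h0

end PortAux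

theorem stmt10 {X : Type*} [NormedAddCommGroup X] [NormedSpace ℝ X] [CompleteSpace X]
    (hseq : ∃ x : ℕ → X, (∀ n, ‖x n‖ = 1) ∧
      ∀ v : X, Tendsto (fun n => ‖v + x n‖) atTop (𝓝 (max ‖v‖ 1)))
    (hsel : ∃ U : Ultrafilter ℕ, SelectiveUltrafilter U) :
    ∃ h : Dual ℝ (Dual ℝ (Dual ℝ (Dual ℝ X))), ‖h‖ = 1 ∧
      ∀ x : X, ‖fourthDualEmbed X x + h‖ = max ‖x‖ 1 := by
  exact stmt10_aux hseq hsel
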